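/- For each n ≥ 1, the subset X_{≤n} of mm-isomorphism classes of metric measure spaces whose support has at most n points is closed in the space X_fin of mm-isomorphism classes of metric measure spaces with finite support, equipped with the box distance. -/

import Mathlib

/-!
Let `ε` be the smallest atom of `μ` and `r` the smallest distance between distinct points of `X`.
If a coupling `π` of `μ` and `ν` gives `S` mass more than `1 - ε`, then `S` relates every point
of `X` to some point of `Y`. When `Y` has fewer points than `X`, two distinct points of `X` then
share a partner, so the distortion of `S` is at least `r`. Hence every competitor in the box
distance is at least `min ε r > 0`.
-/

open MeasureTheory

/-- The distortion of a relation `S ⊆ X × Y` between metric spaces. -/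
noncomputable def relDis {X Y : Type*} [MetricSpace X] [MetricSpace Y] (S : Set (X × Y)) : ℝ :=
  sSup {v | ∃ p ∈ S, ∃ q ∈ S, v = |dist p.1 q.1 - dist p.2 q.2|}

/-- The box distance between two metric measure spaces. -/
noncomputable def boxDist (X Y : Type*) [MetricSpace X] [MetricSpace Y]
    [MeasurableSpace X] [MeasurableSpace Y] (μ : Measure X) (ν : Measure Y) : ℝ :=
  sInf {v | ∃ π : Measure (X × Y), π.map Prod.fst = μ ∧ π.map Prod.snd = ν ∧
    ∃ S : Set (X × Y), IsClosed S ∧ v = max (1 - (π S).toReal) (relDis S)}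

lemma exists_pos_forall_le_of_finite {ι : Type*} [Finite ι] (f : ι → ℝ) (hf : ∀ i, 0 < f i) :
    ∃ ε > 0, ∀ i, ε ≤ f i := by
  cases isEmpty_or_nonempty ι
  · exact ⟨1, one_pos, isEmptyElim⟩
  · obtain ⟨i₀, hi₀⟩ := Finite.exists_min f
    exact ⟨f i₀, hf i₀, hi₀⟩

lemma exists_pos_forall_le_dist_of_ne (X : Type*) [MetricSpace X] [Finite X] :
    ∃ r > 0, ∀ x y : X, x ≠ y → r ≤ dist x y := by
  obtain ⟨r, hr, hle⟩ := exists_pos_forall_le_of_finite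
    (fun p : {p : X × X // p.1 ≠ p.2} => dist p.1.1 p.1.2) fun p => dist_pos.2 p.2
  exact ⟨r, hr, fun x y hxy => hle ⟨(x, y), hxy⟩⟩

section relDis

variable {X Y : Type*} [MetricSpace X] [MetricSpace Y] [BoundedSpace X] [BoundedSpace Y]

lemma abs_dist_sub_dist_le_relDis {S : Set (X × Y)} {p q : X × Y} (hp : p ∈ S) (hq : q ∈ S) :
    |dist p.1 q.1 - dist p.2 q.2| ≤ relDis S := by
  refine le_csSup ⟨Metric.diam (Set.univ : Set X) + Metric.diam (Set.univ : Set Y), ?_⟩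
    ⟨p, hp, q, hq, rfl⟩
  rintro v ⟨p', -, q', -, rfl⟩
  have hX := Metric.dist_le_diam_of_mem (Bornology.isBounded_univ.2 ‹_›)
    (Set.mem_univ p'.1) (Set.mem_univ q'.1)
  have hY := Metric.dist_le_diam_of_mem (Bornology.isBounded_univ.2 ‹_›)
    (Set.mem_univ p'.2) (Set.mem_univ q'.2)
  rw [abs_le]
  constructor <;>
    linarith [dist_nonneg (x := p'.1) (y := q'.1), dist_nonneg (x := p'.2) (y := q'.2)]

lemma dist_le_relDis_of_mem_of_mem {S : Set (X × Y)} {x₁ x₂ : X} {y : Y}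
    (h₁ : (x₁, y) ∈ S) (h₂ : (x₂, y) ∈ S) : dist x₁ x₂ ≤ relDis S := by
  simpa using abs_dist_sub_dist_le_relDis h₁ h₂

end relDis

lemma measureReal_add_map_fst_le_one {X Y : Type*} [MeasurableSpace X] [MeasurableSpace Y]
    {π : Measure (X × Y)} [IsProbabilityMeasure π] {S : Set (X × Y)} {A : Set X}
    (hA : MeasurableSet A) (hSA : ∀ p ∈ S, p.1 ∉ A) :
    π.real S + (π.map Prod.fst).real A ≤ 1 := by
  have hdisj : Disjoint S (Prod.fst ⁻¹' A) := Set.disjoint_left.2 hSA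
  rw [map_measureReal_apply measurable_fst hA, ← measureReal_union hdisj (measurable_fst hA)]
  exact measureReal_le_one

lemma le_boxDist {X Y : Type*} [MetricSpace X] [MetricSpace Y]
    [MeasurableSpace X] [MeasurableSpace Y] {μ : Measure X} {ν : Measure Y}
    [IsProbabilityMeasure μ] [IsProbabilityMeasure ν] {δ : ℝ}
    (h : ∀ π : Measure (X × Y), IsProbabilityMeasure π → π.map Prod.fst = μ →
      π.map Prod.snd = ν → ∀ S : Set (X × Y), IsClosed S → δ ≤ max (1 - π.real S) (relDis S)) :
    δ ≤ boxDist X Y μ ν := by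
  refine le_csInf ⟨_, μ.prod ν, by simp, by simp, Set.univ, isClosed_univ, rfl⟩ ?_
  rintro v ⟨π, hπμ, hπν, S, hS, rfl⟩
  have : IsProbabilityMeasure π := by
    subst hπμ
    exact Measure.isProbabilityMeasure_of_map Prod.fst
  exact h π this hπμ hπν S hS

lemma min_le_max_one_sub_measureReal_relDis {X Y : Type*} [MetricSpace X] [MetricSpace Y]
    [MeasurableSpace X] [MeasurableSingletonClass X] [MeasurableSpace Y] [Finite X] [Finite Y]
    (hcard : Nat.card Y < Nat.card X) {π : Measure (X × Y)} [IsProbabilityMeasure π]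
    {ε r : ℝ} (hε : ∀ x, ε ≤ (π.map Prod.fst).real {x}) (hr : ∀ x y : X, x ≠ y → r ≤ dist x y)
    (S : Set (X × Y)) : min ε r ≤ max (1 - π.real S) (relDis S) := by
  by_cases hS : ε ≤ 1 - π.real S
  · exact le_max_of_le_left (min_le_of_left_le hS)
  have hpartner : ∀ x, ∃ y, (x, y) ∈ S := by
    intro x
    by_contra! hx
    have := measureReal_add_map_fst_le_one (π := π) (measurableSet_singleton x)
      fun p hp hpx => hx p.2 (by rwa [← Set.mem_singleton_iff.1 hpx])
    linarith [hε x]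
  choose f hf using hpartner
  have hf_not_inj : ¬ Function.Injective f := fun hinj =>
    (Nat.card_le_card_of_injective f hinj).not_gt hcard
  obtain ⟨x₁, x₂, hfx, hne⟩ := Function.not_injective_iff.1 hf_not_inj
  have hdist := dist_le_relDis_of_mem_of_mem (hf x₁) (hfx ▸ hf x₂)
  exact le_max_of_le_right (min_le_of_right_le ((hr x₁ x₂ hne).trans hdist))

theorem stmt7_general (n : ℕ)
    {X : Type} [MetricSpace X] [MeasurableSpace X] [BorelSpace X] [Fintype X]
    (μ : Measure X) [IsProbabilityMeasure μ] (hsuppX : ∀ x : X, 0 < μ {x})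
    (hcard : n < Nat.card X) :
    ∃ δ > (0 : ℝ), ∀ (Y : Type) [MetricSpace Y] [MeasurableSpace Y] [BorelSpace Y]
      [Fintype Y] [Nonempty Y] (ν : Measure Y), IsProbabilityMeasure ν →
      (∀ y : Y, 0 < ν {y}) → Nat.card Y ≤ n → δ ≤ boxDist X Y μ ν := by
  obtain ⟨ε, hε, hεμ⟩ := exists_pos_forall_le_of_finite (fun x => μ.real {x})
    fun x => ENNReal.toReal_pos (hsuppX x).ne' (measure_ne_top μ _)
  obtain ⟨r, hr, hrX⟩ := exists_pos_forall_le_dist_of_ne X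
  refine ⟨min ε r, lt_min hε hr, fun Y _ _ _ _ _ ν _ _ hY => le_boxDist ?_⟩
  intro π _ hπμ _ S _
  exact min_le_max_one_sub_measureReal_relDis (hY.trans_lt hcard) (hπμ ▸ hεμ) hrX S

/-- `X_{≤ n}` is closed in `X_fin`: every finite metric measure space with full support and
more than `n` points has, for some `δ > 0`, box distance at least `δ` from every metric
measure space with at most `n` points (i.e. the complement of `X_{≤ n}` is open). -/
theorem stmt7 (n : ℕ) (hn : 1 ≤ n)
    {X : Type} [MetricSpace X] [MeasurableSpace X] [BorelSpace X] [Fintype X] [Nonempty X]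
    (μ : Measure X) [IsProbabilityMeasure μ] (hsuppX : ∀ x : X, 0 < μ {x})
    (hcard : n < Nat.card X) :
    ∃ δ > (0 : ℝ), ∀ (Y : Type) [MetricSpace Y] [MeasurableSpace Y] [BorelSpace Y]
      [Fintype Y] [Nonempty Y] (ν : Measure Y), IsProbabilityMeasure ν →
      (∀ y : Y, 0 < ν {y}) → Nat.card Y ≤ n → δ ≤ boxDist X Y μ ν :=
  stmt7_general n μ hsuppX hcard
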